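/- arXiv:2411.13733 — 3 statements merged into one kernel-verified Lean document; each statement's English description precedes it below -/
import Mathlib

section
/- For a 1-Lipschitz function φ: ℝ → ℝ applied coordinatewise, and any two weight-matrix tuples, the composed network outputs satisfy ‖φ(W_ℓ φ(⋯φ(W_1 x))) − φ(W'_ℓ φ(⋯φ(W'_1 x)))‖ ≤ ‖A x − A' x‖ where A, A' are products of weight matrices interleaved with diagonal matrices whose entries lie in [0,1] (for ReLU). -/
open Matrix MeasureTheory ProbabilityTheory Real

/-- Frobenius norm of a real matrix. -/
noncomputable def frobNorm {a b : ℕ} (W : Matrix (Fin a) (Fin b) ℝ) : ℝ :=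
  Real.sqrt (∑ i, ∑ j, (W i j)^2)

/-- Spectral (ℓ2 operator) norm of a real matrix. -/
noncomputable def specNorm {a b : ℕ} (W : Matrix (Fin a) (Fin b) ℝ) : ℝ :=
  ‖(LinearMap.toContinuousLinearMap (Matrix.toEuclideanLin W))‖

/-- Euclidean norm of a vector. -/
noncomputable def vecNorm {a : ℕ} (v : Fin a → ℝ) : ℝ := Real.sqrt (∑ i, (v i)^2)

/-- `Γ` is a random matrix with i.i.d. standard Gaussian entries. -/
def IsStdGaussianMatrix {h m : ℕ} {Ω : Type*} [MeasurableSpace Ω] (μ : Measure Ω)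
    (Γ : Ω → Matrix (Fin h) (Fin m) ℝ) : Prop :=
  (∀ p : Fin h × Fin m, Measure.map (fun ω => Γ ω p.1 p.2) μ = gaussianReal 0 1) ∧
    iIndepFun (fun (p : Fin h × Fin m) ω => Γ ω p.1 p.2) μ

/-- The matrix product `W_L ⋯ W_1`. -/
noncomputable def chainProd : (L : ℕ) → (dims : ℕ → ℕ) →
    (W : ∀ i : Fin L, Matrix (Fin (dims (i+1))) (Fin (dims i)) ℝ) →
    Matrix (Fin (dims L)) (Fin (dims 0)) ℝ
  | 0, _, _ => 1
  | (L+1), dims, W => W (⟨L, Nat.lt_succ_self L⟩ : Fin (L+1)) *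
      chainProd L dims (fun i => W i.castSucc)

/-- Interleaved product `D_L W_L D_{L-1} W_{L-1} ⋯ D_1 W_1`. -/
noncomputable def interDW : (L : ℕ) → (dims : ℕ → ℕ) →
    (W : ∀ i : Fin L, Matrix (Fin (dims (i+1))) (Fin (dims i)) ℝ) →
    (D : ∀ i : Fin L, Matrix (Fin (dims (i+1))) (Fin (dims (i+1))) ℝ) →
    Matrix (Fin (dims L)) (Fin (dims 0)) ℝ
  | 0, _, _, _ => 1
  | (L+1), dims, W, D =>
      D (⟨L, Nat.lt_succ_self L⟩ : Fin (L+1)) * W (⟨L, Nat.lt_succ_self L⟩ : Fin (L+1)) *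
        interDW L dims (fun i => W i.castSucc) (fun i => D i.castSucc)

/-- Interleaved product `W_{L+1} D_L W_L ⋯ D_1 W_1` (no diagonal factor after the last layer). -/
noncomputable def interWD (L : ℕ) (dims : ℕ → ℕ)
    (W : ∀ i : Fin (L+1), Matrix (Fin (dims (i+1))) (Fin (dims i)) ℝ)
    (D : ∀ i : Fin L, Matrix (Fin (dims (i+1))) (Fin (dims (i+1))) ℝ) :
    Matrix (Fin (dims (L+1))) (Fin (dims 0)) ℝ :=
  W (⟨L, Nat.lt_succ_self L⟩ : Fin (L+1)) * interDW L dims (fun i => W i.castSucc) D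

/-- Coordinatewise ReLU. -/
noncomputable def reluVec {n : ℕ} (v : Fin n → ℝ) : Fin n → ℝ := fun i => max (v i) 0

/-- Depth-`L` ReLU network `x ↦ φ(W_L φ(⋯ φ(W_1 x)))`. -/
noncomputable def reluNet : (L : ℕ) → (dims : ℕ → ℕ) →
    (W : ∀ i : Fin L, Matrix (Fin (dims (i+1))) (Fin (dims i)) ℝ) →
    (x : Fin (dims 0) → ℝ) → (Fin (dims L) → ℝ)
  | 0, _, _, x => x
  | (L+1), dims, W, x =>
      reluVec ((W (⟨L, Nat.lt_succ_self L⟩ : Fin (L+1))).mulVec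
        (reluNet L dims (fun i => W i.castSucc) x))

/-- A matrix is diagonal with diagonal entries in `[0,1]`. -/
def IsBoxDiagonal {n : ℕ} (D : Matrix (Fin n) (Fin n) ℝ) : Prop :=
  ∃ g : Fin n → ℝ, (∀ k, g k ∈ Set.Icc (0:ℝ) 1) ∧ D = Matrix.diagonal g

/-!
ReLU acts on a vector `v` as the diagonal 0/1 mask `[v ≥ 0]`, so by induction on the depth the
network output is `D_L W_L ⋯ D_1 W_1 x` for the masks met along the forward pass. With these masks
the two sides of the inequality coincide.
-/

noncomputable def reluMask {n : ℕ} (v : Fin n → ℝ) : Fin n → ℝ :=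
  fun k => if 0 ≤ v k then 1 else 0

lemma isBoxDiagonal_diagonal_reluMask {n : ℕ} (v : Fin n → ℝ) :
    IsBoxDiagonal (diagonal (reluMask v)) :=
  ⟨reluMask v, fun k => by unfold reluMask; split_ifs <;> simp, rfl⟩

lemma reluVec_eq_diagonal_reluMask_mulVec {n : ℕ} (v : Fin n → ℝ) :
    reluVec v = diagonal (reluMask v) *ᵥ v := by
  funext k
  simp only [reluVec, reluMask, mulVec_diagonal]
  split_ifs with h
  · simp [h]
  · simp [(not_le.mp h).le]

lemma interDW_succ_lastCases_mulVec (L : ℕ) (dims : ℕ → ℕ)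
    (W : ∀ i : Fin (L+1), Matrix (Fin (dims (i+1))) (Fin (dims i)) ℝ)
    (M : Matrix (Fin (dims (Fin.last L + 1))) (Fin (dims (Fin.last L + 1))) ℝ)
    (D : ∀ i : Fin L, Matrix (Fin (dims (i+1))) (Fin (dims (i+1))) ℝ) (x : Fin (dims 0) → ℝ) :
    interDW (L+1) dims W (Fin.lastCases M D) *ᵥ x =
      M *ᵥ (W (Fin.last L) *ᵥ (interDW L dims (fun i => W i.castSucc) D *ᵥ x)) := by
  simp only [interDW, Fin.lastCases_castSucc, ← mulVec_mulVec]
  congr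
  exact Fin.lastCases_last

lemma exists_isBoxDiagonal_reluNet_eq_interDW_mulVec (L : ℕ) (dims : ℕ → ℕ)
    (W : ∀ i : Fin L, Matrix (Fin (dims (i+1))) (Fin (dims i)) ℝ) (x : Fin (dims 0) → ℝ) :
    ∃ D : ∀ i : Fin L, Matrix (Fin (dims (i+1))) (Fin (dims (i+1))) ℝ,
      (∀ i, IsBoxDiagonal (D i)) ∧ reluNet L dims W x = interDW L dims W D *ᵥ x := by
  induction L with
  | zero => exact ⟨finZeroElim, finZeroElim, by simp [reluNet, interDW]⟩
  | succ L ih =>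
    obtain ⟨D, hD, hnet⟩ := ih (fun i => W i.castSucc)
    set v := W (Fin.last L) *ᵥ reluNet L dims (fun i => W i.castSucc) x
    refine ⟨Fin.lastCases (diagonal (reluMask v)) D, fun i => ?_, ?_⟩
    · induction i using Fin.lastCases with
      | last => simpa using isBoxDiagonal_diagonal_reluMask v
      | cast j => simpa using hD j
    · change reluVec v = _
      rw [interDW_succ_lastCases_mulVec, ← hnet]
      exact reluVec_eq_diagonal_reluMask_mulVec v

/-- for ReLU networks, the difference of outputs on an input `x` is
bounded by `‖Ax − A'x‖` where `A, A'` are products of the weight matrices interleaved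
with diagonal matrices whose entries lie in `[0,1]`. -/
theorem relu_net_diff_le_interleaved {L : ℕ} (dims : ℕ → ℕ)
    (W W' : ∀ i : Fin L, Matrix (Fin (dims (i+1))) (Fin (dims i)) ℝ)
    (x : Fin (dims 0) → ℝ) :
    ∃ D D' : ∀ i : Fin L, Matrix (Fin (dims (i+1))) (Fin (dims (i+1))) ℝ,
      (∀ i, IsBoxDiagonal (D i)) ∧ (∀ i, IsBoxDiagonal (D' i)) ∧
      vecNorm (reluNet L dims W x - reluNet L dims W' x)
        ≤ vecNorm ((interDW L dims W D).mulVec x - (interDW L dims W' D').mulVec x) := by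
  obtain ⟨D, hD, hnet⟩ := exists_isBoxDiagonal_reluNet_eq_interDW_mulVec L dims W x
  obtain ⟨D', hD', hnet'⟩ := exists_isBoxDiagonal_reluNet_eq_interDW_mulVec L dims W' x
  exact ⟨D, D', hD, hD', by rw [hnet, hnet']⟩
end

section
/- The diameter (in Frobenius norm, of the image of a data matrix X) of the class of depth-ℓ ReLU networks with layer spectral norms at most B_j and layer ranks at most r_j is at most ‖X‖_F · √(2·min_j r_j) · 2·∏_{j=1}^ℓ B_j. -/
/-! ReLU never increases the Euclidean norm, so a network whose layers have spectral norms
at most `B_j` maps `x` to a vector of norm at most `∏ B_j ‖x‖`, and two such networks differ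
on `x` by at most `2 ∏ B_j ‖x‖`; summing the squares over the rows of `X` gives the bound
`‖X‖_F · 2 ∏ B_j`. The factor `√(2 r_k)` is at least `1` unless `r_k = 0`, and then
`W_k = W'_k = 0`, so both networks vanish identically. -/

open Matrix MeasureTheory ProbabilityTheory Real

theorem Matrix.eq_zero_of_rank_eq_zero {m n R : Type*} [Fintype n] [DecidableEq n] [Field R]
    {A : Matrix m n R} (h : A.rank = 0) : A = 0 := by
  rw [Matrix.rank, Submodule.finrank_eq_zero, LinearMap.range_eq_bot] at h
  exact Matrix.toLin'.injective (by rw [map_zero]; exact h)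

lemma vecNorm_eq_norm_toLp {a : ℕ} (v : Fin a → ℝ) : vecNorm v = ‖WithLp.toLp 2 v‖ := by
  simp [vecNorm, EuclideanSpace.norm_eq]

lemma vecNorm_mulVec_le {a b : ℕ} (W : Matrix (Fin a) (Fin b) ℝ) (v : Fin b → ℝ) :
    vecNorm (W *ᵥ v) ≤ specNorm W * vecNorm v := by
  rw [vecNorm_eq_norm_toLp, vecNorm_eq_norm_toLp]
  exact (LinearMap.toContinuousLinearMap (Matrix.toEuclideanLin W)).le_opNorm (WithLp.toLp 2 v)

lemma vecNorm_sub_le {a : ℕ} (u v : Fin a → ℝ) : vecNorm (u - v) ≤ vecNorm u + vecNorm v := by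
  simpa only [vecNorm_eq_norm_toLp, WithLp.toLp_sub] using norm_sub_le _ _

lemma vecNorm_reluVec_le {a : ℕ} (v : Fin a → ℝ) : vecNorm (reluVec v) ≤ vecNorm v := by
  refine Real.sqrt_le_sqrt (Finset.sum_le_sum fun i _ => ?_)
  rw [← sq_abs (v i)]
  exact pow_le_pow_left₀ (le_max_right _ _) (max_le (le_abs_self _) (abs_nonneg _)) 2

lemma reluVec_zero {a : ℕ} : reluVec (0 : Fin a → ℝ) = 0 := by
  ext i; simp [reluVec]

lemma vecNorm_reluNet_le {dims : ℕ → ℕ} : ∀ {L : ℕ}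
    {W : ∀ i : Fin L, Matrix (Fin (dims (i+1))) (Fin (dims i)) ℝ} {B : Fin L → ℝ},
    (∀ i, specNorm (W i) ≤ B i) → ∀ x, vecNorm (reluNet L dims W x) ≤ (∏ i, B i) * vecNorm x
  | 0, _, _, _, x => by simp [reluNet]
  | L + 1, W, B, hB, x => by
    have hB_nonneg : 0 ≤ B (Fin.last L) := (norm_nonneg _).trans (hB _)
    calc vecNorm (reluNet (L + 1) dims W x)
        ≤ specNorm (W (Fin.last L)) * vecNorm (reluNet L dims (fun i => W i.castSucc) x) :=
          (vecNorm_reluVec_le _).trans (vecNorm_mulVec_le _ _)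
      _ ≤ B (Fin.last L) * ((∏ i : Fin L, B i.castSucc) * vecNorm x) :=
          mul_le_mul (hB _) (vecNorm_reluNet_le (fun i => hB i.castSucc) x)
            (Real.sqrt_nonneg _) hB_nonneg
      _ = (∏ i, B i) * vecNorm x := by rw [Fin.prod_univ_castSucc]; ring

lemma reluNet_eq_zero_of_eq_zero {dims : ℕ → ℕ} : ∀ {L : ℕ}
    {W : ∀ i : Fin L, Matrix (Fin (dims (i+1))) (Fin (dims i)) ℝ} (k : Fin L), W k = 0 →
    ∀ x, reluNet L dims W x = 0
  | L + 1, W, k, hk, x => by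
    induction k using Fin.lastCases with
    | last => simp only [reluNet]; rw [show W ⟨L, _⟩ = 0 from hk, zero_mulVec, reluVec_zero]
    | cast j =>
      simp only [reluNet]
      rw [reluNet_eq_zero_of_eq_zero j hk, mulVec_zero, reluVec_zero]

lemma vecNorm_reluNet_sub_le {L : ℕ} {dims : ℕ → ℕ}
    {W W' : ∀ i : Fin L, Matrix (Fin (dims (i+1))) (Fin (dims i)) ℝ} {B : Fin L → ℝ}
    (hW : ∀ i, specNorm (W i) ≤ B i) (hW' : ∀ i, specNorm (W' i) ≤ B i) (x : Fin (dims 0) → ℝ) :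
    vecNorm (reluNet L dims W x - reluNet L dims W' x) ≤ 2 * (∏ i, B i) * vecNorm x := by
  linarith [vecNorm_sub_le (reluNet L dims W x) (reluNet L dims W' x),
    vecNorm_reluNet_le hW x, vecNorm_reluNet_le hW' x]

lemma frobNorm_of {m n : ℕ} (X : Fin m → Fin n → ℝ) :
    frobNorm (of X) = Real.sqrt (∑ i, vecNorm (X i) ^ 2) := by
  simp only [frobNorm, vecNorm, of_apply]
  congr 1
  exact Finset.sum_congr rfl fun i _ => (Real.sq_sqrt (by positivity)).symm

lemma frobNorm_of_le_of_rows_le {m a b : ℕ} {Y : Fin m → Fin a → ℝ} {X : Fin m → Fin b → ℝ}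
    {c : ℝ} (hc : 0 ≤ c) (h : ∀ i, vecNorm (Y i) ≤ c * vecNorm (X i)) :
    frobNorm (of Y) ≤ c * frobNorm (of X) := by
  rw [frobNorm_of, frobNorm_of, ← Real.sqrt_sq hc, ← Real.sqrt_mul (sq_nonneg c), Finset.mul_sum]
  refine Real.sqrt_le_sqrt (Finset.sum_le_sum fun i _ => ?_)
  rw [← mul_pow]
  exact pow_le_pow_left₀ (Real.sqrt_nonneg _) (h i) 2

/-- the Frobenius-norm diameter of the image of the data matrix `X` under
the class of depth-`L+1` ReLU networks with layer spectral norms `≤ B_j` and layer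
ranks `≤ r_j` is at most `‖X‖_F · √(2 min_j r_j) · 2 ∏_j B_j`. -/
theorem diameter_relu_class_le {L m : ℕ} (dims : ℕ → ℕ)
    (B : Fin (L+1) → ℝ) (r : Fin (L+1) → ℕ)
    (X : Fin m → Fin (dims 0) → ℝ)
    (W W' : ∀ i : Fin (L+1), Matrix (Fin (dims (i+1))) (Fin (dims i)) ℝ)
    (hW : ∀ i, specNorm (W i) ≤ B i) (hr : ∀ i, (W i).rank ≤ r i)
    (hW' : ∀ i, specNorm (W' i) ≤ B i) (hr' : ∀ i, (W' i).rank ≤ r i) :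
    ∀ k : Fin (L+1),
      Real.sqrt (∑ i, (vecNorm (reluNet (L+1) dims W (X i) - reluNet (L+1) dims W' (X i)))^2)
        ≤ frobNorm (Matrix.of X) * Real.sqrt (2 * r k) * (2 * ∏ j, B j) := by
  intro k
  have hB : 0 ≤ 2 * ∏ j, B j :=
    mul_nonneg zero_le_two (Finset.prod_nonneg fun j _ => (norm_nonneg _).trans (hW j))
  rw [← frobNorm_of]
  rcases (r k).eq_zero_or_pos with hrk | hrk
  · have hWk : W k = 0 := eq_zero_of_rank_eq_zero (Nat.le_zero.mp (hrk ▸ hr k))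
    have hW'k : W' k = 0 := eq_zero_of_rank_eq_zero (Nat.le_zero.mp (hrk ▸ hr' k))
    have h_zero : frobNorm (of fun i => reluNet (L+1) dims W (X i) - reluNet (L+1) dims W' (X i))
        = 0 := by
      simp [frobNorm, reluNet_eq_zero_of_eq_zero k hWk, reluNet_eq_zero_of_eq_zero k hW'k]
    rw [h_zero]
    exact mul_nonneg (mul_nonneg (Real.sqrt_nonneg _) (Real.sqrt_nonneg _)) hB
  · have h_one_le : 1 ≤ Real.sqrt (2 * r k) :=
      Real.one_le_sqrt.mpr (by norm_cast; omega)
    calc frobNorm (of fun i => reluNet (L+1) dims W (X i) - reluNet (L+1) dims W' (X i))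
        ≤ (2 * ∏ j, B j) * frobNorm (of X) :=
          frobNorm_of_le_of_rows_le hB fun i => vecNorm_reluNet_sub_le hW hW' (X i)
      _ ≤ frobNorm (of X) * Real.sqrt (2 * r k) * (2 * ∏ j, B j) := by
          rw [mul_comm]
          exact mul_le_mul_of_nonneg_right (le_mul_of_one_le_right (Real.sqrt_nonneg _) h_one_le) hB
end

section
/- Talagrand contraction for Gaussian complexity: if φ: ℝ → ℝ is L-Lipschitz, then for any finite function class H on sample x_1,…,x_m, E_γ sup_{h∈H} ∑ᵢ γᵢ φ(h(xᵢ)) ≤ L · E_γ sup_{h∈H} ∑ᵢ γᵢ h(xᵢ), where γᵢ are i.i.d. standard Gaussians, provided 0 ∈ {(h(x₁),…,h(x_m)) : h ∈ H} or H is symmetric (so both suprema are nonnegative). -/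
open Matrix MeasureTheory ProbabilityTheory Real

/-!
Only the symmetry of the Gaussian law and its first moment matter. Fix one coordinate `t` of
`γ` and lump the other terms into offsets `c_h`. If `h₁` maximises `t x_h + c_h` and `h₂`
maximises `-t x_h + c_h`, the sum of the two suprema is `t (x_{h₁} - x_{h₂}) + c_{h₁} + c_{h₂}`;
when `|x_h - x_{h'}| ≤ |y_h - y_{h'}|` this is at most `|t (y_{h₁} - y_{h₂})| + c_{h₁} + c_{h₂}`,
which is bounded by the same sum of suprema for `y`. Averaging over `t` and `-t` therefore
replaces the coordinate `x_h = φ (h xᵢ)` by `y_h = L h xᵢ`; by Fubini this is done one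
coordinate at a time.
-/

open Finset

section SupIntegrable

variable {α ι : Type*} [MeasurableSpace α] {μ : Measure α}

theorem MeasureTheory.Integrable.finset_sup' {s : Finset ι} (hs : s.Nonempty)
    {f : ι → α → ℝ} (hf : ∀ i ∈ s, Integrable (f i) μ) :
    Integrable (fun x => s.sup' hs fun i => f i x) μ := by
  induction hs using Finset.Nonempty.cons_induction with
  | singleton i => simpa using hf i (mem_singleton_self i)
  | cons i s hi hs ih =>
    simp only [sup'_cons hs]
    exact (hf i (mem_cons_self i s)).sup (ih fun j hj => hf j (mem_cons_of_mem hj))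

theorem integrable_sup'_sum_mul {κ : Type*} [Fintype κ] {ν : Measure ℝ} [IsFiniteMeasure ν]
    (hν : Integrable id ν) {s : Finset ι} (hs : s.Nonempty) (X : ι → κ → ℝ) :
    Integrable (fun γ : κ → ℝ => s.sup' hs fun i => ∑ j, γ j * X i j)
      (Measure.pi fun _ => ν) :=
  Integrable.finset_sup' hs fun _ _ =>
    integrable_finsetSum _ fun _ _ => (integrable_eval hν).mul_const _

end SupIntegrable

section InsertNth

variable {α : Type*} [MeasurableSpace α] {ν : Measure α} [SigmaFinite ν] {n : ℕ}
  {f : (Fin (n + 1) → α) → ℝ}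

theorem MeasureTheory.Integrable.comp_insertNth (k : Fin (n + 1))
    (hf : Integrable f (Measure.pi fun _ => ν)) :
    Integrable (fun p : α × (Fin n → α) => f (k.insertNth p.1 p.2))
      (ν.prod (Measure.pi fun _ => ν)) :=
  ((measurePreserving_piFinSuccAbove (fun _ => ν) k).symm.integrable_comp_emb
    (MeasurableEquiv.measurableEmbedding _)).mpr hf

theorem integral_pi_eq_integral_integral_insertNth (k : Fin (n + 1))
    (hf : Integrable f (Measure.pi fun _ => ν)) :
    ∫ x, f x ∂Measure.pi (fun _ => ν) =
      ∫ ω, ∫ t, f (k.insertNth t ω) ∂ν ∂Measure.pi (fun _ => ν) := by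
  rw [← (measurePreserving_piFinSuccAbove (fun _ => ν) k).symm.integral_comp']
  exact integral_prod_symm _ (hf.comp_insertNth k)

end InsertNth

section Contraction

variable {ι : Type*} {s : Finset ι}

theorem sup'_add_sup'_neg_le (hs : s.Nonempty) {x y : ι → ℝ} (c : ι → ℝ)
    (hxy : ∀ i ∈ s, ∀ i' ∈ s, |x i - x i'| ≤ |y i - y i'|) (t : ℝ) :
    s.sup' hs (fun i => t * x i + c i) + s.sup' hs (fun i => -t * x i + c i)
      ≤ s.sup' hs (fun i => t * y i + c i) + s.sup' hs (fun i => -t * y i + c i) := by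
  obtain ⟨i, hi, hx⟩ := exists_mem_eq_sup' hs fun i => t * x i + c i
  obtain ⟨i', hi', hx'⟩ := exists_mem_eq_sup' hs fun i => -t * x i + c i
  have hbound : t * (x i - x i') ≤ |t * (y i - y i')| :=
    calc t * (x i - x i') ≤ |t| * |x i - x i'| := (le_abs_self _).trans (abs_mul _ _).le
      _ ≤ |t| * |y i - y i'| := mul_le_mul_of_nonneg_left (hxy i hi i' hi') (abs_nonneg t)
      _ = |t * (y i - y i')| := (abs_mul _ _).symm
  have h₁ := le_sup' (fun i => t * y i + c i) hi
  have h₂ := le_sup' (fun i => -t * y i + c i) hi'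
  have h₃ := le_sup' (fun i => t * y i + c i) hi'
  have h₄ := le_sup' (fun i => -t * y i + c i) hi
  rw [hx, hx']
  rcases abs_cases (t * (y i - y i')) with ⟨habs, -⟩ | ⟨habs, -⟩ <;> linarith

variable {μ : Measure ℝ} [IsFiniteMeasure μ] [μ.IsNegInvariant]

theorem integral_sup'_mul_add_le_of_abs_sub_le (hμ : Integrable id μ) (hs : s.Nonempty)
    {x y : ι → ℝ} (c : ι → ℝ)
    (hxy : ∀ i ∈ s, ∀ i' ∈ s, |x i - x i'| ≤ |y i - y i'|) :
    ∫ t, s.sup' hs (fun i => t * x i + c i) ∂μ ≤ ∫ t, s.sup' hs (fun i => t * y i + c i) ∂μ := by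
  have hint (z : ι → ℝ) : Integrable (fun t => s.sup' hs fun i => t * z i + c i) μ :=
    Integrable.finset_sup' hs fun i _ => (hμ.mul_const (z i)).add (integrable_const _)
  have hpair := integral_mono ((hint x).add (hint x).comp_neg) ((hint y).add (hint y).comp_neg)
    (sup'_add_sup'_neg_le hs c hxy)
  simp only [Pi.add_apply] at hpair
  rw [integral_add (hint x) (hint x).comp_neg, integral_add (hint y) (hint y).comp_neg,
    integral_neg_eq_self (fun t => s.sup' hs fun i => t * x i + c i),
    integral_neg_eq_self (fun t => s.sup' hs fun i => t * y i + c i)] at hpair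
  linarith

theorem integral_sup'_sum_mul_le_of_abs_sub_le_at {n : ℕ} (hμ : Integrable id μ) (hs : s.Nonempty)
    {X Y : ι → Fin (n + 1) → ℝ} (k : Fin (n + 1)) (hXY : ∀ i, ∀ j ≠ k, X i j = Y i j)
    (hk : ∀ i ∈ s, ∀ i' ∈ s, |X i k - X i' k| ≤ |Y i k - Y i' k|) :
    ∫ γ, s.sup' hs (fun i => ∑ j, γ j * X i j) ∂Measure.pi (fun _ => μ)
      ≤ ∫ γ, s.sup' hs (fun i => ∑ j, γ j * Y i j) ∂Measure.pi (fun _ => μ) := by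
  have hslice (Z : ι → Fin (n + 1) → ℝ) (t : ℝ) (ω : Fin n → ℝ) :
      (s.sup' hs fun i => ∑ j, (k.insertNth t ω : Fin (n + 1) → ℝ) j * Z i j) =
        s.sup' hs fun i => t * Z i k + ∑ j, ω j * Z i (k.succAbove j) := by
    simp [Fin.sum_univ_succAbove _ k]
  have hX := integrable_sup'_sum_mul hμ hs X
  have hY := integrable_sup'_sum_mul hμ hs Y
  rw [integral_pi_eq_integral_integral_insertNth k hX,
    integral_pi_eq_integral_integral_insertNth k hY]
  refine integral_mono (hX.comp_insertNth k).integral_prod_right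
    (hY.comp_insertNth k).integral_prod_right fun ω => ?_
  simp only [hslice, hXY _ _ (k.succAbove_ne _)]
  exact integral_sup'_mul_add_le_of_abs_sub_le hμ hs _ hk

theorem integral_sup'_sum_mul_le_of_abs_sub_le {n : ℕ} (hμ : Integrable id μ) (hs : s.Nonempty)
    {X Y : ι → Fin n → ℝ} (hXY : ∀ i ∈ s, ∀ i' ∈ s, ∀ j, |X i j - X i' j| ≤ |Y i j - Y i' j|) :
    ∫ γ, s.sup' hs (fun i => ∑ j, γ j * X i j) ∂Measure.pi (fun _ => μ)
      ≤ ∫ γ, s.sup' hs (fun i => ∑ j, γ j * Y i j) ∂Measure.pi (fun _ => μ) := by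
  classical
  suffices hybrid : ∀ S : Finset (Fin n),
      ∫ γ, s.sup' hs (fun i => ∑ j, γ j * S.piecewise (X i) (Y i) j) ∂Measure.pi (fun _ => μ)
        ≤ ∫ γ, s.sup' hs (fun i => ∑ j, γ j * Y i j) ∂Measure.pi (fun _ => μ) by
    simpa using hybrid univ
  intro S
  induction S using Finset.induction_on with
  | empty => simp
  | @insert k S hk ih =>
    cases n with
    | zero => exact k.elim0
    | succ n =>
      refine le_trans (integral_sup'_sum_mul_le_of_abs_sub_le_at hμ hs k
        (fun i j hj => ?_) fun i hi i' hi' => ?_) ih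
      · exact piecewise_insert_of_ne S (X i) (Y i) hj
      · simpa [piecewise_eq_of_notMem _ _ _ hk] using hXY i hi i' hi' k

theorem integral_sup'_sum_mul_comp_le_mul {n : ℕ} (hμ : Integrable id μ) (H : Finset (Fin n → ℝ))
    (hH : H.Nonempty) (φ : ℝ → ℝ) (L : ℝ) (hLip : ∀ s t : ℝ, |φ s - φ t| ≤ L * |s - t|) :
    ∫ γ, H.sup' hH (fun v => ∑ i, γ i * φ (v i)) ∂Measure.pi (fun _ => μ)
      ≤ L * ∫ γ, H.sup' hH (fun v => ∑ i, γ i * v i) ∂Measure.pi (fun _ => μ) := by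
  have hL : 0 ≤ L := by simpa using (abs_nonneg _).trans (hLip 1 0)
  calc _ ≤ ∫ γ, H.sup' hH (fun v => ∑ i, γ i * (L * v i)) ∂Measure.pi (fun _ => μ) :=
        integral_sup'_sum_mul_le_of_abs_sub_le hμ hH fun v _ w _ i => by
          rw [← mul_sub, abs_mul, abs_of_nonneg hL]
          exact hLip _ _
    _ = L * ∫ γ, H.sup' hH (fun v => ∑ i, γ i * v i) ∂Measure.pi (fun _ => μ) := by
        rw [← integral_const_mul]
        congr 1 with γ
        rw [mul_comm L, sup'_mul₀ hL]
        congr 1 with v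
        rw [sum_mul]
        exact sum_congr rfl fun i _ => by ring

end Contraction

instance ProbabilityTheory.isNegInvariant_gaussianReal (v : NNReal) :
    (gaussianReal 0 v).IsNegInvariant :=
  ⟨by simpa [Measure.neg_def] using gaussianReal_map_neg (μ := 0) (v := v)⟩

theorem talagrand_contraction_gaussian_general {m : ℕ} (H : Finset (Fin m → ℝ)) (hH : H.Nonempty)
    (φ : ℝ → ℝ) (L : ℝ) (hLip : ∀ s t : ℝ, |φ s - φ t| ≤ L * |s - t|) :
    ∫ γ : Fin m → ℝ, H.sup' hH (fun v => ∑ i, γ i * φ (v i))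
        ∂(Measure.pi fun _ : Fin m => gaussianReal 0 1)
      ≤ L * ∫ γ : Fin m → ℝ, H.sup' hH (fun v => ∑ i, γ i * v i)
        ∂(Measure.pi fun _ : Fin m => gaussianReal 0 1) :=
  integral_sup'_sum_mul_comp_le_mul (memLp_one_iff_integrable.mp (memLp_id_gaussianReal 1))
    H hH φ L hLip

/-- Talagrand contraction for Gaussian complexity: if `φ` is `L`-Lipschitz
with `φ(0)=0`, and the (finite) class contains `0` or is symmetric, then
`E_γ sup_h ∑ γ_i φ(h(x_i)) ≤ L · E_γ sup_h ∑ γ_i h(x_i)`. -/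
theorem talagrand_contraction_gaussian {m : ℕ} (H : Finset (Fin m → ℝ)) (hH : H.Nonempty)
    (φ : ℝ → ℝ) (L : ℝ) (hLip : ∀ s t : ℝ, |φ s - φ t| ≤ L * |s - t|) (hφ0 : φ 0 = 0)
    (hsym : (0 : Fin m → ℝ) ∈ H ∨ ∀ v ∈ H, -v ∈ H) :
    ∫ γ : Fin m → ℝ, H.sup' hH (fun v => ∑ i, γ i * φ (v i))
        ∂(Measure.pi fun _ : Fin m => gaussianReal 0 1)
      ≤ L * ∫ γ : Fin m → ℝ, H.sup' hH (fun v => ∑ i, γ i * v i)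
        ∂(Measure.pi fun _ : Fin m => gaussianReal 0 1) :=
  talagrand_contraction_gaussian_general H hH φ L hLip
end
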